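/- arXiv:1710.03262 — 4 statements merged into one kernel-verified Lean document; each statement's English description precedes it below -/
import Mathlib

section
/- Let F : [0,1]² → ℝ be continuous with F(1/2,1/2) = ‖F‖_{L∞([0,1]²)}, and let w solve the Dirichlet problem (5). Then F(1/2,1/2) − π² w(1/2,1/2) ≥ ‖F‖_{L∞([0,1]²)} / cosh(π/2). -/
open Real Set

noncomputable section

/-- The closed unit square `[0,1]²`. -/
def unitSq : Set (ℝ × ℝ) := Icc 0 1 ×ˢ Icc 0 1

/-- The open unit square `(0,1)²`. -/
def unitOSq : Set (ℝ × ℝ) := Ioo 0 1 ×ˢ Ioo 0 1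

/-- The `L∞([0,1]²)` norm of `F`. -/
def supNorm (F : ℝ × ℝ → ℝ) : ℝ := sSup ((fun p => |F p|) '' unitSq)

/-- Pure second partial derivative `∂_x² w` at `p`. -/
def pdx2 (w : ℝ × ℝ → ℝ) (p : ℝ × ℝ) : ℝ := deriv (deriv (fun x => w (x, p.2))) p.1

/-- Pure second partial derivative `∂_y² w` at `p`. -/
def pdy2 (w : ℝ × ℝ → ℝ) (p : ℝ × ℝ) : ℝ := deriv (deriv (fun y => w (p.1, y))) p.2

/-- `p` lies on the boundary of the unit square. -/
def OnBdry (p : ℝ × ℝ) : Prop := p.1 = 0 ∨ p.1 = 1 ∨ p.2 = 0 ∨ p.2 = 1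

/-- `w` solves the Dirichlet problem (5): `-Δw + π² w = F` in `(0,1)²`, `w = 0` on the
boundary, with `w` continuous on `[0,1]²` and twice continuously differentiable inside. -/
def SolvesP5 (F w : ℝ × ℝ → ℝ) : Prop :=
  ContinuousOn w unitSq ∧ ContDiffOn ℝ 2 w unitOSq ∧
    (∀ p ∈ unitOSq, -(pdx2 w p + pdy2 w p) + π ^ 2 * w p = F p) ∧
    (∀ p ∈ unitSq, OnBdry p → w p = 0)

/-- The weights `γ_{ij}`: `2/3` if `i = j = N/2`, and `1` otherwise. -/
def gam (N i j : ℕ) : ℝ := if i = N / 2 ∧ j = N / 2 then 2 / 3 else 1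

/-- Second difference in `x` on the grid of step `h = 1/N`. -/
def dx2 (N : ℕ) (V : ℕ → ℕ → ℝ) (i j : ℕ) : ℝ :=
  (V (i + 1) j - 2 * V i j + V (i - 1) j) / ((N : ℝ)⁻¹ ^ 2)

/-- Second difference in `y` on the grid of step `h = 1/N`. -/
def dy2 (N : ℕ) (V : ℕ → ℕ → ℝ) (i j : ℕ) : ℝ :=
  (V i (j + 1) - 2 * V i j + V i (j - 1)) / ((N : ℝ)⁻¹ ^ 2)

/-- `W` solves the two-dimensional scheme (7). -/
def Scheme2d (N : ℕ) (F : ℝ × ℝ → ℝ) (W : ℕ → ℕ → ℝ) : Prop :=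
  (∀ i j, 0 < i → i < N → 0 < j → j < N →
    -(dx2 N W i j + dy2 N W i j) + gam N i j * π ^ 2 * W i j
      = gam N i j * F ((i : ℝ) / N, (j : ℝ) / N)) ∧
  (∀ i j, i ≤ N → j ≤ N → (i = 0 ∨ i = N ∨ j = 0 ∨ j = N) → W i j = 0)

/-- Regularity: third-order smoothness up to the boundary of the square and pure
fourth-order partial derivatives in `x` and `y` existing inside, with
`|∂_x⁴ w| + |∂_y⁴ w| ≤ M` there. -/
def Reg4 (w : ℝ × ℝ → ℝ) (M : ℝ) : Prop :=
  ContDiffOn ℝ 3 w unitSq ∧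
    ∀ p ∈ unitOSq,
      (∀ k < 4, DifferentiableAt ℝ (deriv^[k] fun x => w (x, p.2)) p.1) ∧
      (∀ k < 4, DifferentiableAt ℝ (deriv^[k] fun y => w (p.1, y)) p.2) ∧
      |deriv^[4] (fun x => w (x, p.2)) p.1| + |deriv^[4] (fun y => w (p.1, y)) p.2| ≤ M


/-!
With `M = ‖F‖_∞`, the barrier `ψ(x, y) = M/π² · (1 - cosh(π(x - 1/2)) / cosh(π/2))`
satisfies `-Δψ + π²ψ = M ≥ F = -Δw + π²w` in the square and `ψ ≥ 0 = w` on its boundary.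
At an interior minimum of `ψ - w` both pure second partials are nonnegative, so the minimum
cannot be negative and `w ≤ ψ`. At the centre `π²ψ = M - M / cosh(π/2)`, which together with
`F(1/2, 1/2) = M` is the bound.
-/

open Topology

theorem isCompact_unitSq : IsCompact unitSq := isCompact_Icc.prod isCompact_Icc

theorem isOpen_unitOSq : IsOpen unitOSq := isOpen_Ioo.prod isOpen_Ioo

theorem unitOSq_subset_unitSq : unitOSq ⊆ unitSq :=
  prod_mono Ioo_subset_Icc_self Ioo_subset_Icc_self

theorem mem_unitOSq_of_not_onBdry {p : ℝ × ℝ} (hp : p ∈ unitSq) (hb : ¬OnBdry p) :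
    p ∈ unitOSq := by
  simp only [OnBdry, not_or] at hb
  obtain ⟨⟨h0, h1⟩, ⟨h2, h3⟩⟩ := hp
  exact ⟨⟨h0.lt_of_ne' hb.1, h1.lt_of_ne hb.2.1⟩, ⟨h2.lt_of_ne' hb.2.2.1, h3.lt_of_ne hb.2.2.2⟩⟩

theorem abs_le_supNorm {F : ℝ × ℝ → ℝ} (hF : ContinuousOn F unitSq) {p : ℝ × ℝ}
    (hp : p ∈ unitSq) : |F p| ≤ supNorm F :=
  le_csSup (isCompact_unitSq.image_of_continuousOn hF.abs).bddAbove ⟨p, hp, rfl⟩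

/-- If `f'' a < 0`, the second derivative test makes `a` also a local maximum, so `f` is
locally constant at `a` and `f'' a = 0` after all. -/
theorem IsLocalMin.deriv_deriv_nonneg {f : ℝ → ℝ} {a : ℝ} (hmin : IsLocalMin f a)
    (hf : ContinuousAt f a) : 0 ≤ deriv (deriv f) a := by
  by_contra! hneg
  have hmax := isLocalMax_of_deriv_deriv_neg hneg hmin.deriv_eq_zero hf
  have hconst : f =ᶠ[𝓝 a] fun _ => f a :=
    (hmin.and hmax).mono fun _ hx => le_antisymm hx.2 hx.1
  simp [hconst.deriv.deriv_eq] at hneg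

theorem pdx2_nonneg_of_isLocalMin {u : ℝ × ℝ → ℝ} {p : ℝ × ℝ} (hmin : IsLocalMin u p)
    (hu : ContinuousAt u p) : 0 ≤ pdx2 u p := by
  have hslice : ContinuousAt (fun x => (x, p.2)) p.1 := by fun_prop
  exact (hmin.comp_continuous hslice).deriv_deriv_nonneg (hu.comp hslice)

theorem pdy2_nonneg_of_isLocalMin {u : ℝ × ℝ → ℝ} {p : ℝ × ℝ} (hmin : IsLocalMin u p)
    (hu : ContinuousAt u p) : 0 ≤ pdy2 u p := by
  have hslice : ContinuousAt (fun y => (p.1, y)) p.2 := by fun_prop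
  exact (hmin.comp_continuous hslice).deriv_deriv_nonneg (hu.comp hslice)

theorem nonneg_of_neg_laplacian_add_mul_nonneg {c : ℝ} (hc : 0 < c) {u : ℝ × ℝ → ℝ}
    (hu : ContinuousOn u unitSq)
    (hin : ∀ p ∈ unitOSq, 0 ≤ -(pdx2 u p + pdy2 u p) + c * u p)
    (hbd : ∀ p ∈ unitSq, OnBdry p → 0 ≤ u p) :
    ∀ p ∈ unitSq, 0 ≤ u p := by
  obtain ⟨p₀, hp₀, hmin⟩ :=
    isCompact_unitSq.exists_isMinOn ⟨(0, 0), by norm_num [unitSq]⟩ hu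
  intro p hp
  refine le_trans ?_ (hmin hp)
  by_contra! hneg
  have hp₀' : p₀ ∈ unitOSq :=
    mem_unitOSq_of_not_onBdry hp₀ fun hb => (hbd p₀ hp₀ hb).not_gt hneg
  have hnhds : unitSq ∈ 𝓝 p₀ :=
    Filter.mem_of_superset (isOpen_unitOSq.mem_nhds hp₀') unitOSq_subset_unitSq
  have hloc : IsLocalMin u p₀ := hmin.isLocalMin hnhds
  have hcont : ContinuousAt u p₀ := hu.continuousAt hnhds
  have hneg' : c * u p₀ < 0 := mul_neg_of_pos_of_neg hc hneg
  linarith [hin p₀ hp₀', pdx2_nonneg_of_isLocalMin hloc hcont,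
    pdy2_nonneg_of_isLocalMin hloc hcont]

theorem deriv_deriv_sub {f g : ℝ → ℝ} {s : Set ℝ} {a : ℝ} (hs : IsOpen s)
    (hf : ContDiffOn ℝ 2 f s) (hg : ContDiffOn ℝ 2 g s) (ha : a ∈ s) :
    deriv (deriv (f - g)) a = deriv (deriv f) a - deriv (deriv g) a := by
  have hd : ∀ {h : ℝ → ℝ}, ContDiffOn ℝ 2 h s → ∀ x ∈ s, DifferentiableAt ℝ h x :=
    fun hh x hx => (hh.differentiableOn two_ne_zero).differentiableAt (hs.mem_nhds hx)
  have hd' : ∀ {h : ℝ → ℝ}, ContDiffOn ℝ 2 h s → DifferentiableAt ℝ (deriv h) a :=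
    fun hh => ((hh.deriv_of_isOpen hs (m := 1) le_rfl).differentiableOn one_ne_zero)
      |>.differentiableAt (hs.mem_nhds ha)
  have hderiv : deriv (f - g) =ᶠ[𝓝 a] deriv f - deriv g := by
    filter_upwards [hs.mem_nhds ha] with x hx
    exact deriv_sub (hd hf x hx) (hd hg x hx)
  rw [hderiv.deriv_eq]
  exact deriv_sub (hd' hf) (hd' hg)

theorem contDiffOn_slice_fst {n : WithTop ℕ∞} {u : ℝ × ℝ → ℝ} (hu : ContDiffOn ℝ n u unitOSq)
    {y : ℝ} (hy : y ∈ Ioo (0 : ℝ) 1) : ContDiffOn ℝ n (fun x => u (x, y)) (Ioo 0 1) :=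
  hu.comp (contDiff_id.prodMk contDiff_const).contDiffOn fun _ hx => ⟨hx, hy⟩

theorem contDiffOn_slice_snd {n : WithTop ℕ∞} {u : ℝ × ℝ → ℝ} (hu : ContDiffOn ℝ n u unitOSq)
    {x : ℝ} (hx : x ∈ Ioo (0 : ℝ) 1) : ContDiffOn ℝ n (fun y => u (x, y)) (Ioo 0 1) :=
  hu.comp (contDiff_const.prodMk contDiff_id).contDiffOn fun _ hy => ⟨hx, hy⟩

theorem pdx2_sub {u v : ℝ × ℝ → ℝ} (hu : ContDiffOn ℝ 2 u unitOSq)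
    (hv : ContDiffOn ℝ 2 v unitOSq) {p : ℝ × ℝ} (hp : p ∈ unitOSq) :
    pdx2 (u - v) p = pdx2 u p - pdx2 v p :=
  deriv_deriv_sub isOpen_Ioo (contDiffOn_slice_fst hu hp.2) (contDiffOn_slice_fst hv hp.2)
    hp.1

theorem pdy2_sub {u v : ℝ × ℝ → ℝ} (hu : ContDiffOn ℝ 2 u unitOSq)
    (hv : ContDiffOn ℝ 2 v unitOSq) {p : ℝ × ℝ} (hp : p ∈ unitOSq) :
    pdy2 (u - v) p = pdy2 u p - pdy2 v p :=
  deriv_deriv_sub isOpen_Ioo (contDiffOn_slice_snd hu hp.1) (contDiffOn_slice_snd hv hp.1)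
    hp.2

theorem le_of_neg_laplacian_add_mul_le {c : ℝ} (hc : 0 < c) {v ψ : ℝ × ℝ → ℝ}
    (hv : ContinuousOn v unitSq) (hv₂ : ContDiffOn ℝ 2 v unitOSq)
    (hψ : ContinuousOn ψ unitSq) (hψ₂ : ContDiffOn ℝ 2 ψ unitOSq)
    (hin : ∀ p ∈ unitOSq,
      -(pdx2 v p + pdy2 v p) + c * v p ≤ -(pdx2 ψ p + pdy2 ψ p) + c * ψ p)
    (hbd : ∀ p ∈ unitSq, OnBdry p → v p ≤ ψ p) :
    ∀ p ∈ unitSq, v p ≤ ψ p := by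
  have hin' : ∀ p ∈ unitOSq, 0 ≤ -(pdx2 (ψ - v) p + pdy2 (ψ - v) p) + c * (ψ - v) p := by
    intro p hp
    rw [pdx2_sub hψ₂ hv₂ hp, pdy2_sub hψ₂ hv₂ hp, Pi.sub_apply]
    linarith [hin p hp]
  intro p hp
  exact sub_nonneg.1 <| nonneg_of_neg_laplacian_add_mul_nonneg hc (hψ.sub hv) hin'
    (fun q hq hb => sub_nonneg.2 (hbd q hq hb)) p hp

def coshProfile (k x : ℝ) : ℝ := 1 - cosh (k * (x - 1 / 2)) / cosh (k / 2)

theorem hasDerivAt_mul_sub_half (k x : ℝ) : HasDerivAt (fun x => k * (x - 1 / 2)) k x :=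
  (((hasDerivAt_id' x).sub_const (1 / 2)).const_mul k).congr_deriv (mul_one k)

theorem contDiff_coshProfile (k : ℝ) : ContDiff ℝ 2 (coshProfile k) := by
  unfold coshProfile
  fun_prop

theorem hasDerivAt_coshProfile (k x : ℝ) :
    HasDerivAt (coshProfile k) (-(k * sinh (k * (x - 1 / 2)) / cosh (k / 2))) x := by
  exact (((hasDerivAt_mul_sub_half k x).cosh.div_const (cosh (k / 2))).const_sub 1).congr_deriv
    (by ring)

theorem deriv_deriv_coshProfile (k x : ℝ) :
    deriv (deriv (coshProfile k)) x = -(k ^ 2 * cosh (k * (x - 1 / 2)) / cosh (k / 2)) := by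
  rw [funext fun x => (hasDerivAt_coshProfile k x).deriv,
    (((hasDerivAt_mul_sub_half k x).sinh.const_mul k).div_const (cosh (k / 2))).fun_neg.deriv]
  ring

theorem coshProfile_nonneg (k : ℝ) {x : ℝ} (hx : x ∈ Icc (0 : ℝ) 1) : 0 ≤ coshProfile k x := by
  have habs : |k * (x - 1 / 2)| ≤ |k / 2| := by
    rw [abs_mul, abs_div, abs_two]
    have : |x - 1 / 2| ≤ 1 / 2 := abs_le.2 ⟨by linarith [hx.1], by linarith [hx.2]⟩
    nlinarith [abs_nonneg k]
  exact sub_nonneg.2 ((div_le_one (cosh_pos _)).2 (cosh_le_cosh.2 habs))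

def barrier (k M : ℝ) (p : ℝ × ℝ) : ℝ := M / k ^ 2 * coshProfile k p.1

theorem contDiff_barrier (k M : ℝ) : ContDiff ℝ 2 (barrier k M) :=
  contDiff_const.mul ((contDiff_coshProfile k).comp contDiff_fst)

theorem neg_laplacian_add_mul_barrier {k : ℝ} (hk : k ≠ 0) (M : ℝ) (p : ℝ × ℝ) :
    -(pdx2 (barrier k M) p + pdy2 (barrier k M) p) + k ^ 2 * barrier k M p = M := by
  simp only [pdx2, pdy2, barrier, deriv_const_mul_field', deriv_deriv_coshProfile, deriv_const']
  simp only [coshProfile]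
  field_simp
  ring

theorem barrier_nonneg (k : ℝ) {M : ℝ} (hM : 0 ≤ M) {p : ℝ × ℝ} (hp : p ∈ unitSq) :
    0 ≤ barrier k M p :=
  mul_nonneg (by positivity) (coshProfile_nonneg k hp.1)

theorem sq_mul_barrier_centre {k : ℝ} (hk : k ≠ 0) (M : ℝ) :
    k ^ 2 * barrier k M (1 / 2, 1 / 2) = M - M / cosh (k / 2) := by
  simp only [barrier, coshProfile, sub_self, mul_zero, cosh_zero]
  field_simp

/-- `F(1/2,1/2) - π² w(1/2,1/2) ≥ ‖F‖_∞ / cosh(π/2)`. -/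
theorem tilde_F_lower_bound_at_centre (F w : ℝ × ℝ → ℝ)
    (hF : ContinuousOn F unitSq) (hFmax : F (1 / 2, 1 / 2) = supNorm F)
    (hw : SolvesP5 F w) :
    supNorm F / Real.cosh (π / 2) ≤ F (1 / 2, 1 / 2) - π ^ 2 * w (1 / 2, 1 / 2) := by
  obtain ⟨hwc, hw₂, hweq, hwbd⟩ := hw
  have hcentre : ((1 : ℝ) / 2, (1 : ℝ) / 2) ∈ unitSq := by norm_num [unitSq]
  have hM : 0 ≤ supNorm F := (abs_nonneg _).trans (abs_le_supNorm hF hcentre)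
  have hw_le : w (1 / 2, 1 / 2) ≤ barrier π (supNorm F) (1 / 2, 1 / 2) := by
    refine le_of_neg_laplacian_add_mul_le (sq_pos_of_pos pi_pos) hwc hw₂
      (contDiff_barrier _ _).continuous.continuousOn (contDiff_barrier _ _).contDiffOn
      (fun p hp => ?_) (fun p hp hb => ?_) _ hcentre
    · rw [hweq p hp, neg_laplacian_add_mul_barrier pi_ne_zero]
      exact (le_abs_self _).trans (abs_le_supNorm hF (unitOSq_subset_unitSq hp))
    · rw [hwbd p hp hb]
      exact barrier_nonneg π hM hp
  have hscaled := mul_le_mul_of_nonneg_left hw_le (sq_nonneg π)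
  rw [sq_mul_barrier_centre pi_ne_zero] at hscaled
  linarith
end
end

section
/- Let N be an even positive integer and let V : {0,…,N}³ → ℝ be a grid function. If −(δ_x² V + δ_y² V + γ_{ij} δ_z² V)_{ijk} ≥ 0 for all i,j,k ∈ {1,…,N−1}, and V_{ijk} ≥ 0 whenever any of i,j,k lies in {0,N}, then V_{ijk} ≥ 0 for all i,j,k ∈ {0,…,N}. -/
open Real Set

noncomputable section

/-- Second difference in `x` for 3D grid functions, step `h = 1/N`. -/
def dx2₃ (N : ℕ) (V : ℕ → ℕ → ℕ → ℝ) (i j k : ℕ) : ℝ :=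
  (V (i + 1) j k - 2 * V i j k + V (i - 1) j k) / ((N : ℝ)⁻¹ ^ 2)

/-- Second difference in `y` for 3D grid functions, step `h = 1/N`. -/
def dy2₃ (N : ℕ) (V : ℕ → ℕ → ℕ → ℝ) (i j k : ℕ) : ℝ :=
  (V i (j + 1) k - 2 * V i j k + V i (j - 1) k) / ((N : ℝ)⁻¹ ^ 2)

/-- Second difference in `z` for 3D grid functions, step `h = 1/N`. -/
def dz2₃ (N : ℕ) (V : ℕ → ℕ → ℕ → ℝ) (i j k : ℕ) : ℝ :=
  (V i j (k + 1) - 2 * V i j k + V i j (k - 1)) / ((N : ℝ)⁻¹ ^ 2)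

/-- `U` solves the three-dimensional scheme (3):
`-(δ_x² U + δ_y² U + γ_{ij} δ_z² U) = γ_{ij} F(x_i,y_j) sin(π z_k)` at interior nodes,
`U = 0` at boundary nodes. -/
def Scheme3d (N : ℕ) (F : ℝ × ℝ → ℝ) (U : ℕ → ℕ → ℕ → ℝ) : Prop :=
  (∀ i j k, 0 < i → i < N → 0 < j → j < N → 0 < k → k < N →
    -(dx2₃ N U i j k + dy2₃ N U i j k + gam N i j * dz2₃ N U i j k)
      = gam N i j * F ((i : ℝ) / N, (j : ℝ) / N) * Real.sin (π * ((k : ℝ) / N))) ∧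
  (∀ i j k, i ≤ N → j ≤ N → k ≤ N →
    (i = 0 ∨ i = N ∨ j = 0 ∨ j = N ∨ k = 0 ∨ k = N) → U i j k = 0)

/-- discrete maximum principle for `L^h = -(δ_x² + δ_y² + γ_{ij} δ_z²)`. -/
theorem discrete_maximum_principle (N : ℕ) (hN : 0 < N) (hNe : Even N)
    (V : ℕ → ℕ → ℕ → ℝ)
    (hop : ∀ i j k, 0 < i → i < N → 0 < j → j < N → 0 < k → k < N →
      0 ≤ -(dx2₃ N V i j k + dy2₃ N V i j k + gam N i j * dz2₃ N V i j k))
    (hb : ∀ i j k, i ≤ N → j ≤ N → k ≤ N →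
      (i = 0 ∨ i = N ∨ j = 0 ∨ j = N ∨ k = 0 ∨ k = N) → 0 ≤ V i j k) :
    ∀ i j k, i ≤ N → j ≤ N → k ≤ N → 0 ≤ V i j k := by
  classical
  intro i j k hi hj hk
  set T : Finset (ℕ × ℕ × ℕ) :=
    (Finset.range (N + 1)) ×ˢ (Finset.range (N + 1)) ×ˢ (Finset.range (N + 1)) with hT
  have hmem : (i, j, k) ∈ T := by
    simp [hT, Nat.lt_succ_iff, hi, hj, hk]
  obtain ⟨p, hpT, hpmin⟩ := T.exists_min_image (fun q => V q.1 q.2.1 q.2.2) ⟨_, hmem⟩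
  obtain ⟨pi, pj, pk⟩ := p
  set m := V pi pj pk with hm
  by_cases hm0 : 0 ≤ m
  · exact le_trans hm0 (hpmin _ hmem)
  push_neg at hm0
  exfalso
  have hmin : ∀ a b c, a ≤ N → b ≤ N → c ≤ N → m ≤ V a b c := by
    intro a b c ha hb' hc
    exact hpmin (a, b, c) (by simp [hT, Nat.lt_succ_iff, ha, hb', hc])
  have h2pos : (0 : ℝ) < ((N : ℝ)⁻¹ ^ 2) := by positivity
  have key : ∀ a b c, a ≤ N → b ≤ N → c ≤ N → V a b c = m → False := by
    intro a
    induction a with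
    | zero =>
      intro b c ha hb' hc hV
      have := hb 0 b c (Nat.zero_le N) hb' hc (Or.inl rfl)
      linarith [hV ▸ this]
    | succ n ih =>
      intro b c ha hb' hc hV
      by_cases hbdy : n + 1 = N ∨ b = 0 ∨ b = N ∨ c = 0 ∨ c = N
      · have h0 := hb (n + 1) b c ha hb' hc (by tauto)
        linarith [hV ▸ h0]
      push_neg at hbdy
      obtain ⟨h1, h2, h3, h4, h5⟩ := hbdy
      have hiN : n + 1 < N := lt_of_le_of_ne ha h1
      have hbN : b < N := lt_of_le_of_ne hb' h3
      have hcN : c < N := lt_of_le_of_ne hc h5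
      have hbp : 0 < b := Nat.pos_of_ne_zero h2
      have hcp : 0 < c := Nat.pos_of_ne_zero h4
      have hO := hop (n + 1) b c (Nat.succ_pos n) hiN hbp hbN hcp hcN
      have hgam : 0 < gam N (n + 1) b := by
        unfold gam; split <;> norm_num
      have hdy : 0 ≤ dy2₃ N V (n + 1) b c := by
        unfold dy2₃
        apply div_nonneg _ h2pos.le
        have h1' := hmin (n + 1) (b + 1) c ha hbN hc
        have h2' := hmin (n + 1) (b - 1) c ha (le_trans (Nat.sub_le b 1) hb') hc
        linarith [hV ▸ h1', hV ▸ h2', hV]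
      have hdz : 0 ≤ dz2₃ N V (n + 1) b c := by
        unfold dz2₃
        apply div_nonneg _ h2pos.le
        have h1' := hmin (n + 1) b (c + 1) ha hb' hcN
        have h2' := hmin (n + 1) b (c - 1) ha hb' (le_trans (Nat.sub_le c 1) hc)
        linarith [hV ▸ h1', hV ▸ h2', hV]
      have hdx : dx2₃ N V (n + 1) b c ≤ 0 := by
        nlinarith [mul_nonneg hgam.le hdz]
      have hAle : V (n + 2) b c - 2 * V (n + 1) b c + V n b c ≤ 0 := by
        unfold dx2₃ at hdx
        simp only [Nat.add_sub_cancel] at hdx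
        rcases div_nonpos_iff.mp hdx with ⟨_, h⟩ | ⟨h, _⟩
        · linarith
        · exact h
      have hn2 := hmin (n + 2) b c hiN hb' hc
      have hnle : V n b c ≤ m := by linarith [hV]
      have hnge := hmin n b c (le_trans (Nat.le_succ n) ha) hb' hc
      exact ih b c (le_trans (Nat.le_succ n) ha) hb' hc (le_antisymm hnle hnge)
  exact key pi pj pk (by
      simp [hT, Nat.lt_succ_iff] at hpT; exact hpT.1)
    (by simp [hT, Nat.lt_succ_iff] at hpT; exact hpT.2.1)
    (by simp [hT, Nat.lt_succ_iff] at hpT; exact hpT.2.2) rfl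
end
end

section
/- Let F : [0,1]² → ℝ be continuous, let N be an even positive integer, and let W solve the two-dimensional scheme. Then |W_{ij}| ≤ π⁻² · ‖F‖_{L∞([0,1]²)} for all i,j ∈ {0,…,N}. -/
open Real Set

noncomputable section

/-- a solution of the two-dimensional scheme satisfies `|W_{ij}| ≤ π⁻² ‖F‖_∞`. -/
theorem scheme2d_bound (F : ℝ × ℝ → ℝ) (N : ℕ) (W : ℕ → ℕ → ℝ)
    (hF : ContinuousOn F unitSq) (hN : 0 < N) (hNe : Even N) (hW : Scheme2d N F W) :
    ∀ i j, i ≤ N → j ≤ N → |W i j| ≤ (π ^ 2)⁻¹ * supNorm F := by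
  have hcomp : IsCompact unitSq := isCompact_Icc.prod isCompact_Icc
  have hbdd : BddAbove ((fun p => |F p|) '' unitSq) :=
    (hcomp.image_of_continuousOn hF.abs).bddAbove
  have hsup : ∀ p ∈ unitSq, |F p| ≤ supNorm F := fun p hp =>
    le_csSup hbdd ⟨p, hp, rfl⟩
  have h00 : ((0:ℝ), (0:ℝ)) ∈ unitSq := by
    simp [unitSq, Set.mem_prod]
  have hsup0 : 0 ≤ supNorm F := (abs_nonneg _).trans (hsup _ h00)
  have hpi : (0:ℝ) < π ^ 2 := by positivity
  obtain ⟨⟨i0, j0⟩, hmem, hmax⟩ := Finset.exists_max_image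
    (Finset.range (N+1) ×ˢ Finset.range (N+1)) (fun p => |W p.1 p.2|)
    ⟨(0, 0), by simp⟩
  simp only [Finset.mem_product, Finset.mem_range, Nat.lt_succ_iff] at hmem
  have hmax' : ∀ i j, i ≤ N → j ≤ N → |W i j| ≤ |W i0 j0| := fun i j hi hj =>
    hmax (i, j) (by simp [Finset.mem_product, Nat.lt_succ_iff, hi, hj])
  suffices h : |W i0 j0| ≤ (π ^ 2)⁻¹ * supNorm F by
    intro i j hi hj; exact (hmax' i j hi hj).trans h
  by_cases hbd : i0 = 0 ∨ i0 = N ∨ j0 = 0 ∨ j0 = N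
  · rw [hW.2 i0 j0 hmem.1 hmem.2 hbd]
    simpa using by positivity
  push_neg at hbd
  obtain ⟨h1, h2, h3, h4⟩ := hbd
  have hi0 : 0 < i0 := Nat.pos_of_ne_zero h1
  have hi0' : i0 < N := lt_of_le_of_ne hmem.1 h2
  have hj0 : 0 < j0 := Nat.pos_of_ne_zero h3
  have hj0' : j0 < N := lt_of_le_of_ne hmem.2 h4
  have hγ : 0 < gam N i0 j0 := by unfold gam; split <;> norm_num
  have heq := hW.1 i0 j0 hi0 hi0' hj0 hj0'
  set gp : ℝ × ℝ := ((i0 : ℝ) / N, (j0 : ℝ) / N) with hgp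
  have hgpmem : gp ∈ unitSq := by
    have hNpos : (0:ℝ) < N := by exact_mod_cast hN
    constructor
    · constructor
      · positivity
      · rw [div_le_one hNpos]; exact_mod_cast hmem.1
    · constructor
      · positivity
      · rw [div_le_one hNpos]; exact_mod_cast hmem.2
  have hFle : F gp ≤ supNorm F := (le_abs_self _).trans (hsup gp hgpmem)
  have hFge : -supNorm F ≤ F gp := (neg_le_neg (hsup gp hgpmem)).trans (neg_abs_le _)
  have hden : (0:ℝ) < (N : ℝ)⁻¹ ^ 2 := by positivity
  rcases le_or_gt 0 (W i0 j0) with hw | hw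
  · have habs : |W i0 j0| = W i0 j0 := abs_of_nonneg hw
    have hn : ∀ i j, i ≤ N → j ≤ N → W i j ≤ W i0 j0 := fun i j hi hj =>
      (le_abs_self _).trans ((hmax' i j hi hj).trans_eq habs)
    have hx : dx2 N W i0 j0 ≤ 0 := by
      apply div_nonpos_of_nonpos_of_nonneg _ hden.le
      have a1 := hn (i0 + 1) j0 hi0' hmem.2
      have a2 := hn (i0 - 1) j0 (by omega) hmem.2
      linarith
    have hy : dy2 N W i0 j0 ≤ 0 := by
      apply div_nonpos_of_nonpos_of_nonneg _ hden.le
      have a1 := hn i0 (j0 + 1) hmem.1 hj0'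
      have a2 := hn i0 (j0 - 1) hmem.1 (by omega)
      linarith
    have hle : gam N i0 j0 * (π ^ 2 * W i0 j0) ≤ gam N i0 j0 * F gp := by
      nlinarith [heq]
    have hle' : π ^ 2 * W i0 j0 ≤ F gp := le_of_mul_le_mul_left hle hγ
    rw [habs, inv_mul_eq_div, le_div_iff₀ hpi]
    linarith
  · have habs : |W i0 j0| = -W i0 j0 := abs_of_neg hw
    have hn : ∀ i j, i ≤ N → j ≤ N → W i0 j0 ≤ W i j := fun i j hi hj => by
      have := (hmax' i j hi hj).trans_eq habs
      linarith [neg_abs_le (W i j)]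
    have hx : 0 ≤ dx2 N W i0 j0 := by
      apply div_nonneg _ hden.le
      have a1 := hn (i0 + 1) j0 hi0' hmem.2
      have a2 := hn (i0 - 1) j0 (by omega) hmem.2
      linarith
    have hy : 0 ≤ dy2 N W i0 j0 := by
      apply div_nonneg _ hden.le
      have a1 := hn i0 (j0 + 1) hmem.1 hj0'
      have a2 := hn i0 (j0 - 1) hmem.1 (by omega)
      linarith
    have hle : gam N i0 j0 * F gp ≤ gam N i0 j0 * (π ^ 2 * W i0 j0) := by
      nlinarith [heq]
    have hle' : F gp ≤ π ^ 2 * W i0 j0 := le_of_mul_le_mul_left hle hγ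
    rw [habs, inv_mul_eq_div, le_div_iff₀ hpi]
    linarith
end
end

section
/- There exists an absolute constant C such that the following holds. Let F : [0,1]² → ℝ be continuous, let N be an even positive integer with h = 1/N, let U solve the three-dimensional scheme and let W solve the two-dimensional scheme. Then for all i,j,k ∈ {0,…,N}, |U_{ijk} − W_{ij}·sin(π z_k)| ≤ C·‖F‖_{L∞([0,1]²)}·h². -/
open Real Set

noncomputable section

namespace Lem2Aux

lemma gam_pos (N i j : ℕ) : 0 < gam N i j := by unfold gam; split <;> norm_num

lemma gam_le_one (N i j : ℕ) : gam N i j ≤ 1 := by unfold gam; split <;> norm_num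

/-- comparison function -/
def phi (N i : ℕ) : ℝ := (i : ℝ) * ((N : ℝ) - i) / (2 * (N : ℝ) ^ 2)

lemma phi_nonneg (N i : ℕ) (h : i ≤ N) : 0 ≤ phi N i := by
  have h1 : (i : ℝ) ≤ (N : ℝ) := by exact_mod_cast h
  have h2 : (0:ℝ) ≤ (i:ℝ) := by positivity
  exact div_nonneg (mul_nonneg h2 (by linarith)) (by positivity)

lemma phi_le (N i : ℕ) (hN : 0 < N) : phi N i ≤ 1 / 8 := by
  have hN' : (0:ℝ) < (N:ℝ) := by exact_mod_cast hN
  unfold phi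
  rw [div_le_iff₀ (by positivity)]
  nlinarith [sq_nonneg (2 * (i:ℝ) - (N:ℝ))]

lemma phi_diff (N i : ℕ) (hN : 0 < N) (hi : 0 < i) :
    phi N (i + 1) - 2 * phi N i + phi N (i - 1) = -(1 / (N : ℝ) ^ 2) := by
  have hN' : (0:ℝ) < (N:ℝ) := by exact_mod_cast hN
  have hc : ((i - 1 : ℕ) : ℝ) = (i : ℝ) - 1 := by
    have : 1 ≤ i := hi
    push_cast [this]; ring
  unfold phi
  rw [hc]
  push_cast
  field_simp
  ring

lemma nonneg3d (N : ℕ) (hN : 0 < N) (V : ℕ → ℕ → ℕ → ℝ)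
    (hb : ∀ i j k, i ≤ N → j ≤ N → k ≤ N →
      (i = 0 ∨ i = N ∨ j = 0 ∨ j = N ∨ k = 0 ∨ k = N) → 0 ≤ V i j k)
    (hin : ∀ i j k, 0 < i → i < N → 0 < j → j < N → 0 < k → k < N →
      0 < -(dx2₃ N V i j k + dy2₃ N V i j k + gam N i j * dz2₃ N V i j k)) :
    ∀ i j k, i ≤ N → j ≤ N → k ≤ N → 0 ≤ V i j k := by
  classical
  set S : Finset (ℕ × ℕ × ℕ) :=
    Finset.range (N+1) ×ˢ Finset.range (N+1) ×ˢ Finset.range (N+1) with hS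
  have hmem : ∀ x y z : ℕ, (x, y, z) ∈ S ↔ x ≤ N ∧ y ≤ N ∧ z ≤ N := by
    intro x y z
    simp [hS, Finset.mem_product, Finset.mem_range, Nat.lt_succ_iff]
  obtain ⟨p, hpS, hmin⟩ := S.exists_min_image (fun p => V p.1 p.2.1 p.2.2)
    ⟨(0,0,0), by simp [hS]⟩
  obtain ⟨a, b, c⟩ := p
  obtain ⟨ha, hb', hc⟩ := (hmem a b c).1 hpS
  have key : 0 ≤ V a b c := by
    by_cases hbd : a = 0 ∨ a = N ∨ b = 0 ∨ b = N ∨ c = 0 ∨ c = N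
    · exact hb a b c ha hb' hc hbd
    · push_neg at hbd
      obtain ⟨h1, h2, h3, h4, h5, h6⟩ := hbd
      have ha0 : 0 < a := Nat.pos_of_ne_zero h1
      have haN : a < N := lt_of_le_of_ne ha h2
      have hb0 : 0 < b := Nat.pos_of_ne_zero h3
      have hbN : b < N := lt_of_le_of_ne hb' h4
      have hc0 : 0 < c := Nat.pos_of_ne_zero h5
      have hcN : c < N := lt_of_le_of_ne hc h6
      exfalso
      have hp := hin a b c ha0 haN hb0 hbN hc0 hcN
      have hd : (0:ℝ) < ((N:ℝ)⁻¹) ^ 2 := by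
        have : (0:ℝ) < (N:ℝ) := by exact_mod_cast hN
        positivity
      have n1 : V a b c ≤ V (a+1) b c :=
        hmin (a+1, b, c) ((hmem _ _ _).2 ⟨by omega, by omega, by omega⟩)
      have n2 : V a b c ≤ V (a-1) b c :=
        hmin (a-1, b, c) ((hmem _ _ _).2 ⟨by omega, by omega, by omega⟩)
      have n3 : V a b c ≤ V a (b+1) c :=
        hmin (a, b+1, c) ((hmem _ _ _).2 ⟨by omega, by omega, by omega⟩)
      have n4 : V a b c ≤ V a (b-1) c :=
        hmin (a, b-1, c) ((hmem _ _ _).2 ⟨by omega, by omega, by omega⟩)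
      have n5 : V a b c ≤ V a b (c+1) :=
        hmin (a, b, c+1) ((hmem _ _ _).2 ⟨by omega, by omega, by omega⟩)
      have n6 : V a b c ≤ V a b (c-1) :=
        hmin (a, b, c-1) ((hmem _ _ _).2 ⟨by omega, by omega, by omega⟩)
      have e1 : 0 ≤ dx2₃ N V a b c := by
        unfold dx2₃; exact div_nonneg (by linarith) hd.le
      have e2 : 0 ≤ dy2₃ N V a b c := by
        unfold dy2₃; exact div_nonneg (by linarith) hd.le
      have e3 : 0 ≤ dz2₃ N V a b c := by
        unfold dz2₃; exact div_nonneg (by linarith) hd.le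
      have e4 : 0 ≤ gam N a b * dz2₃ N V a b c := mul_nonneg (gam_pos N a b).le e3
      linarith
  intro i j k hi hj hk
  exact le_trans key (hmin (i, j, k) ((hmem i j k).2 ⟨hi, hj, hk⟩))

lemma nonneg2d (N : ℕ) (hN : 0 < N) (V : ℕ → ℕ → ℝ)
    (hb : ∀ i j, i ≤ N → j ≤ N → (i = 0 ∨ i = N ∨ j = 0 ∨ j = N) → 0 ≤ V i j)
    (hin : ∀ i j, 0 < i → i < N → 0 < j → j < N →
      0 < -(dx2 N V i j + dy2 N V i j) + gam N i j * π ^ 2 * V i j) :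
    ∀ i j, i ≤ N → j ≤ N → 0 ≤ V i j := by
  classical
  set S : Finset (ℕ × ℕ) := Finset.range (N+1) ×ˢ Finset.range (N+1) with hS
  have hmem : ∀ x y : ℕ, (x, y) ∈ S ↔ x ≤ N ∧ y ≤ N := by
    intro x y; simp [hS, Finset.mem_product, Finset.mem_range, Nat.lt_succ_iff]
  obtain ⟨p, hpS, hmin⟩ := S.exists_min_image (fun p => V p.1 p.2) ⟨(0,0), by simp [hS]⟩
  obtain ⟨a, b⟩ := p
  obtain ⟨ha, hb'⟩ := (hmem a b).1 hpS
  have key : 0 ≤ V a b := by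
    by_cases hbd : a = 0 ∨ a = N ∨ b = 0 ∨ b = N
    · exact hb a b ha hb' hbd
    · push_neg at hbd
      obtain ⟨h1, h2, h3, h4⟩ := hbd
      have ha0 : 0 < a := Nat.pos_of_ne_zero h1
      have haN : a < N := lt_of_le_of_ne ha h2
      have hb0 : 0 < b := Nat.pos_of_ne_zero h3
      have hbN : b < N := lt_of_le_of_ne hb' h4
      have hp := hin a b ha0 haN hb0 hbN
      have hd : (0:ℝ) < ((N:ℝ)⁻¹) ^ 2 := by
        have : (0:ℝ) < (N:ℝ) := by exact_mod_cast hN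
        positivity
      have n1 : V a b ≤ V (a+1) b :=
        hmin (a+1, b) ((hmem _ _).2 ⟨by omega, by omega⟩)
      have n2 : V a b ≤ V (a-1) b :=
        hmin (a-1, b) ((hmem _ _).2 ⟨by omega, by omega⟩)
      have n3 : V a b ≤ V a (b+1) :=
        hmin (a, b+1) ((hmem _ _).2 ⟨by omega, by omega⟩)
      have n4 : V a b ≤ V a (b-1) :=
        hmin (a, b-1) ((hmem _ _).2 ⟨by omega, by omega⟩)
      have e1 : 0 ≤ dx2 N V a b := by
        unfold dx2; exact div_nonneg (by linarith) hd.le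
      have e2 : 0 ≤ dy2 N V a b := by
        unfold dy2; exact div_nonneg (by linarith) hd.le
      have hgp : 0 < gam N a b * π ^ 2 := mul_pos (gam_pos N a b) (by positivity)
      by_contra hneg
      push_neg at hneg
      have : gam N a b * π ^ 2 * V a b < 0 := mul_neg_of_pos_of_neg hgp hneg
      linarith
  intro i j k hk
  exact le_trans key (hmin (i, j) ((hmem i j).2 ⟨k, hk⟩))

lemma stab3d_lower (N : ℕ) (hN : 0 < N) (V R : ℕ → ℕ → ℕ → ℝ) (M ε : ℝ)
    (hM0 : 0 ≤ M) (hε : 0 < ε)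
    (heq : ∀ i j k, 0 < i → i < N → 0 < j → j < N → 0 < k → k < N →
      -(dx2₃ N V i j k + dy2₃ N V i j k + gam N i j * dz2₃ N V i j k) = R i j k)
    (hb : ∀ i j k, i ≤ N → j ≤ N → k ≤ N →
      (i = 0 ∨ i = N ∨ j = 0 ∨ j = N ∨ k = 0 ∨ k = N) → V i j k = 0)
    (hM : ∀ i j k, 0 < i → i < N → 0 < j → j < N → 0 < k → k < N → |R i j k| ≤ M) :
    ∀ i j k, i ≤ N → j ≤ N → k ≤ N → -((M + ε) / 8) ≤ V i j k := by
  have hNne : (N:ℝ) ≠ 0 := by positivity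
  set P : ℕ → ℕ → ℕ → ℝ := fun i j k => (M + ε) * phi N i + V i j k with hP
  have hPnn : ∀ i j k, i ≤ N → j ≤ N → k ≤ N → 0 ≤ P i j k := by
    apply nonneg3d N hN P
    · intro i j k hi hj hk hbd
      have := hb i j k hi hj hk hbd
      simp only [hP, this, add_zero]
      exact mul_nonneg (by linarith) (phi_nonneg N i hi)
    · intro i j k hi1 hi2 hj1 hj2 hk1 hk2
      have hx : dx2₃ N P i j k = -(M + ε) + dx2₃ N V i j k := by
        have hd := phi_diff N i hN hi1
        unfold dx2₃
        simp only [hP]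
        have h2 : (N:ℝ) ^ 2 * ((N:ℝ)⁻¹) ^ 2 = 1 := by field_simp
        field_simp
        linear_combination ((M + ε) * (N:ℝ) ^ 2) * hd - (M + ε) * h2
      have hy : dy2₃ N P i j k = dy2₃ N V i j k := by
        unfold dy2₃; simp only [hP]; ring
      have hz : dz2₃ N P i j k = dz2₃ N V i j k := by
        unfold dz2₃; simp only [hP]; ring
      rw [hx, hy, hz]
      have h1 := heq i j k hi1 hi2 hj1 hj2 hk1 hk2
      have h2 := abs_le.mp (hM i j k hi1 hi2 hj1 hj2 hk1 hk2)
      linarith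
  intro i j k hi hj hk
  have h1 := hPnn i j k hi hj hk
  have h2 : (M + ε) * phi N i ≤ (M + ε) / 8 := by
    have := phi_le N i hN
    nlinarith [phi_nonneg N i hi]
  simp only [hP] at h1
  linarith

lemma stab3d (N : ℕ) (hN : 0 < N) (V R : ℕ → ℕ → ℕ → ℝ) (M : ℝ) (hM0 : 0 ≤ M)
    (heq : ∀ i j k, 0 < i → i < N → 0 < j → j < N → 0 < k → k < N →
      -(dx2₃ N V i j k + dy2₃ N V i j k + gam N i j * dz2₃ N V i j k) = R i j k)
    (hb : ∀ i j k, i ≤ N → j ≤ N → k ≤ N →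
      (i = 0 ∨ i = N ∨ j = 0 ∨ j = N ∨ k = 0 ∨ k = N) → V i j k = 0)
    (hM : ∀ i j k, 0 < i → i < N → 0 < j → j < N → 0 < k → k < N → |R i j k| ≤ M) :
    ∀ i j k, i ≤ N → j ≤ N → k ≤ N → |V i j k| ≤ M / 8 := by
  intro i j k hi hj hk
  apply le_of_forall_pos_le_add
  intro ε hε
  have hlo := stab3d_lower N hN V R M ε hM0 hε heq hb hM i j k hi hj hk
  have hhi := stab3d_lower N hN (fun i j k => -(V i j k)) (fun i j k => -(R i j k)) M ε hM0 hε
    (by intro i j k h1 h2 h3 h4 h5 h6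
        have := heq i j k h1 h2 h3 h4 h5 h6
        unfold dx2₃ dy2₃ dz2₃ at this ⊢
        simp only
        linear_combination -this) 
    (by intro i j k h1 h2 h3 hbd; simp [hb i j k h1 h2 h3 hbd])
    (by intro i j k h1 h2 h3 h4 h5 h6
        simpa [abs_neg] using hM i j k h1 h2 h3 h4 h5 h6)
    i j k hi hj hk
  rw [abs_le]
  constructor <;> linarith

lemma stab2d_lower (N : ℕ) (hN : 0 < N) (V R : ℕ → ℕ → ℝ) (M ε : ℝ)
    (hM0 : 0 ≤ M) (hε : 0 < ε)
    (heq : ∀ i j, 0 < i → i < N → 0 < j → j < N →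
      -(dx2 N V i j + dy2 N V i j) + gam N i j * π ^ 2 * V i j = R i j)
    (hb : ∀ i j, i ≤ N → j ≤ N → (i = 0 ∨ i = N ∨ j = 0 ∨ j = N) → V i j = 0)
    (hM : ∀ i j, 0 < i → i < N → 0 < j → j < N → |R i j| ≤ M) :
    ∀ i j, i ≤ N → j ≤ N → -((M + ε) / 8) ≤ V i j := by
  have hNne : (N:ℝ) ≠ 0 := by positivity
  set P : ℕ → ℕ → ℝ := fun i j => (M + ε) * phi N i + V i j with hP
  have hPnn : ∀ i j, i ≤ N → j ≤ N → 0 ≤ P i j := by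
    apply nonneg2d N hN P
    · intro i j hi hj hbd
      have := hb i j hi hj hbd
      simp only [hP, this, add_zero]
      exact mul_nonneg (by linarith) (phi_nonneg N i hi)
    · intro i j hi1 hi2 hj1 hj2
      have hx : dx2 N P i j = -(M + ε) + dx2 N V i j := by
        have hd := phi_diff N i hN hi1
        have h2 : (N:ℝ) ^ 2 * ((N:ℝ)⁻¹) ^ 2 = 1 := by field_simp
        unfold dx2
        simp only [hP]
        field_simp
        linear_combination ((M + ε) * (N:ℝ) ^ 2) * hd - (M + ε) * h2
      have hy : dy2 N P i j = dy2 N V i j := by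
        unfold dy2; simp only [hP]; ring
      rw [hx, hy]
      have h1 := heq i j hi1 hi2 hj1 hj2
      have h2 := abs_le.mp (hM i j hi1 hi2 hj1 hj2)
      have h3 : 0 ≤ gam N i j * π ^ 2 * ((M + ε) * phi N i) := by
        have := phi_nonneg N i (le_of_lt hi2)
        have := gam_pos N i j
        have := Real.pi_pos
        positivity
      simp only [hP]
      have hexp : gam N i j * π ^ 2 * ((M + ε) * phi N i + V i j) =
          gam N i j * π ^ 2 * ((M + ε) * phi N i) + gam N i j * π ^ 2 * V i j := by ring
      rw [hexp]
      linarith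
  intro i j hi hj
  have h1 := hPnn i j hi hj
  have h2 : (M + ε) * phi N i ≤ (M + ε) / 8 := by
    have := phi_le N i hN
    nlinarith [phi_nonneg N i hi]
  simp only [hP] at h1
  linarith

lemma stab2d (N : ℕ) (hN : 0 < N) (V R : ℕ → ℕ → ℝ) (M : ℝ) (hM0 : 0 ≤ M)
    (heq : ∀ i j, 0 < i → i < N → 0 < j → j < N →
      -(dx2 N V i j + dy2 N V i j) + gam N i j * π ^ 2 * V i j = R i j)
    (hb : ∀ i j, i ≤ N → j ≤ N → (i = 0 ∨ i = N ∨ j = 0 ∨ j = N) → V i j = 0)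
    (hM : ∀ i j, 0 < i → i < N → 0 < j → j < N → |R i j| ≤ M) :
    ∀ i j, i ≤ N → j ≤ N → |V i j| ≤ M / 8 := by
  intro i j hi hj
  apply le_of_forall_pos_le_add
  intro ε hε
  have hlo := stab2d_lower N hN V R M ε hM0 hε heq hb hM i j hi hj
  have hhi := stab2d_lower N hN (fun i j => -(V i j)) (fun i j => -(R i j)) M ε hM0 hε
    (by intro i j h1 h2 h3 h4
        have := heq i j h1 h2 h3 h4
        unfold dx2 dy2 at this ⊢
        simp only
        linear_combination -this)
    (by intro i j h1 h2 hbd; simp [hb i j h1 h2 hbd])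
    (by intro i j h1 h2 h3 h4; simpa [abs_neg] using hM i j h1 h2 h3 h4)
    i j hi hj
  rw [abs_le]
  constructor <;> linarith

lemma lam_close (N : ℕ) (hN : 0 < N) (hEv : Even N) :
    |π ^ 2 - (2 - 2 * Real.cos (π * (N : ℝ)⁻¹)) * (N : ℝ) ^ 2| ≤ 104 * (N : ℝ)⁻¹ ^ 2 := by
  obtain ⟨r, hr⟩ := hEv
  have hcases : N = 2 ∨ 4 ≤ N := by omega
  rcases hcases with h2 | h4
  · subst h2
    have he : π * ((2:ℕ) : ℝ)⁻¹ = π / 2 := by norm_num; ring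
    rw [he, Real.cos_pi_div_two]
    have hpi := Real.pi_gt_three
    have hpi2 : π < 3.15 := Real.pi_lt_d2
    rw [abs_le]
    constructor <;> push_cast <;> nlinarith
  · have hNR : (0:ℝ) < (N:ℝ) := by exact_mod_cast hN
    have hNne : (N:ℝ) ≠ 0 := ne_of_gt hNR
    have hN4 : (4:ℝ) ≤ (N:ℝ) := by exact_mod_cast h4
    have hpi2 : π < 3.15 := Real.pi_lt_d2
    have hpipos := Real.pi_pos
    set x : ℝ := π * (N : ℝ)⁻¹ with hx
    have hxpos : 0 < x := by positivity
    have hxle : x ≤ 1 := by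
      have hple : π ≤ (N:ℝ) := by nlinarith
      calc x = π * (N:ℝ)⁻¹ := hx
        _ ≤ (N:ℝ) * (N:ℝ)⁻¹ := by gcongr
        _ = 1 := mul_inv_cancel₀ hNne
    have hxabs : |x| = x := abs_of_pos hxpos
    have hcb := Real.cos_bound (by rw [hxabs]; exact hxle)
    have hxN : x * (N:ℝ) = π := by rw [hx]; field_simp
    have hident : π ^ 2 - (2 - 2 * Real.cos x) * (N : ℝ) ^ 2
        = 2 * (N:ℝ) ^ 2 * (Real.cos x - (1 - x ^ 2 / 2)) := by
      linear_combination (-(π + x * (N:ℝ))) * hxN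
    rw [hident, abs_mul, abs_of_nonneg (by positivity : (0:ℝ) ≤ 2 * (N:ℝ) ^ 2)]
    have step1 : 2 * (N:ℝ) ^ 2 * |Real.cos x - (1 - x ^ 2 / 2)|
        ≤ 2 * (N:ℝ) ^ 2 * (|x| ^ 4 * (5 / 96)) := by gcongr
    have hx4 : |x| ^ 4 = π ^ 4 * ((N:ℝ)⁻¹) ^ 4 := by rw [hxabs, hx]; ring
    have step2 : 2 * (N:ℝ) ^ 2 * (|x| ^ 4 * (5 / 96)) = 5 / 48 * π ^ 4 * ((N:ℝ)⁻¹) ^ 2 := by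
      rw [hx4]
      field_simp
      ring
    have hp2 : π ^ 2 ≤ 10 := by nlinarith
    have hp4 : π ^ 4 ≤ 100 := by nlinarith [sq_nonneg π, sq_nonneg (π ^ 2)]
    have hinv2 : (0:ℝ) ≤ ((N:ℝ)⁻¹) ^ 2 := by positivity
    calc 2 * (N:ℝ) ^ 2 * |Real.cos x - (1 - x ^ 2 / 2)|
        ≤ 5 / 48 * π ^ 4 * ((N:ℝ)⁻¹) ^ 2 := by rw [← step2]; exact step1
      _ ≤ 104 * (N : ℝ)⁻¹ ^ 2 := by nlinarith

end Lem2Aux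

open Lem2Aux in
/-- Lemma 2: `|U_{ijk} - W_{ij} sin(π z_k)| ≤ C ‖F‖_∞ h²`. -/
theorem three_d_vs_two_d_scheme :
    ∃ C : ℝ, ∀ (F : ℝ × ℝ → ℝ) (N : ℕ) (U : ℕ → ℕ → ℕ → ℝ) (W : ℕ → ℕ → ℝ),
      ContinuousOn F unitSq → 0 < N → Even N → Scheme3d N F U → Scheme2d N F W →
      ∀ i j k, i ≤ N → j ≤ N → k ≤ N →
        |U i j k - W i j * Real.sin (π * ((k : ℝ) / N))| ≤ C * supNorm F * (N : ℝ)⁻¹ ^ 2 := by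
  use 100
  intro F N U W hF hN hEv h3 h2
  have hNR : (0:ℝ) < (N:ℝ) := by exact_mod_cast hN
  have hNne : (N:ℝ) ≠ 0 := ne_of_gt hNR
  -- sup-norm facts
  have hcomp : IsCompact unitSq := isCompact_Icc.prod isCompact_Icc
  have hbdd : BddAbove ((fun p => |F p|) '' unitSq) :=
    (hcomp.image_of_continuousOn hF.abs).bddAbove
  have hFle : ∀ p ∈ unitSq, |F p| ≤ supNorm F := fun p hp => le_csSup hbdd ⟨p, hp, rfl⟩
  have hmemSq : ∀ i j : ℕ, i ≤ N → j ≤ N → ((i:ℝ)/N, (j:ℝ)/N) ∈ unitSq := by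
    intro i j hi hj
    have hi' : (i:ℝ) ≤ (N:ℝ) := by exact_mod_cast hi
    have hj' : (j:ℝ) ≤ (N:ℝ) := by exact_mod_cast hj
    constructor
    · constructor
      · positivity
      · exact div_le_one_of_le₀ hi' hNR.le
    · constructor
      · positivity
      · exact div_le_one_of_le₀ hj' hNR.le
  have hF0 : 0 ≤ supNorm F := by
    have h00 : ((0:ℝ), (0:ℝ)) ∈ unitSq := by
      constructor <;> constructor <;> norm_num
    exact le_trans (abs_nonneg _) (hFle _ h00)
  -- bound on W
  have hW : ∀ i j, i ≤ N → j ≤ N → |W i j| ≤ supNorm F / 8 := by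
    apply stab2d N hN W (fun i j => gam N i j * F ((i:ℝ)/N, (j:ℝ)/N)) (supNorm F) hF0
      h2.1 h2.2
    intro i j hi1 hi2 hj1 hj2
    rw [abs_mul, abs_of_pos (gam_pos N i j)]
    calc gam N i j * |F ((i:ℝ)/N, (j:ℝ)/N)| ≤ 1 * supNorm F :=
          mul_le_mul (gam_le_one N i j) (hFle _ (hmemSq i j hi2.le hj2.le)) (abs_nonneg _)
            zero_le_one
      _ = supNorm F := one_mul _
  have hlamb := lam_close N hN hEv
  set lam : ℝ := (2 - 2 * Real.cos (π * (N : ℝ)⁻¹)) * (N : ℝ) ^ 2 with hlam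
  set E : ℕ → ℕ → ℕ → ℝ := fun i j k => U i j k - W i j * Real.sin (π * ((k:ℝ)/N)) with hE
  set R : ℕ → ℕ → ℕ → ℝ :=
    fun i j k => gam N i j * ((π ^ 2 - lam) * (W i j * Real.sin (π * ((k:ℝ)/N)))) with hR
  -- boundary values of E
  have hEb : ∀ i j k, i ≤ N → j ≤ N → k ≤ N →
      (i = 0 ∨ i = N ∨ j = 0 ∨ j = N ∨ k = 0 ∨ k = N) → E i j k = 0 := by
    intro i j k hi hj hk hbd
    have hU := h3.2 i j k hi hj hk hbd
    simp only [hE, hU, zero_sub, neg_eq_zero]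
    rcases hbd with h | h | h | h | h | h
    · rw [h2.2 i j hi hj (Or.inl h)]; ring
    · rw [h2.2 i j hi hj (Or.inr (Or.inl h))]; ring
    · rw [h2.2 i j hi hj (Or.inr (Or.inr (Or.inl h)))]; ring
    · rw [h2.2 i j hi hj (Or.inr (Or.inr (Or.inr h)))]; ring
    · subst h; simp
    · subst h; rw [div_self hNne, mul_one, Real.sin_pi]; ring
  -- the equation satisfied by E
  have hEeq : ∀ i j k, 0 < i → i < N → 0 < j → j < N → 0 < k → k < N →
      -(dx2₃ N E i j k + dy2₃ N E i j k + gam N i j * dz2₃ N E i j k) = R i j k := by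
    intro i j k hi1 hi2 hj1 hj2 hk1 hk2
    have e3 := h3.1 i j k hi1 hi2 hj1 hj2 hk1 hk2
    have e2 := h2.1 i j hi1 hi2 hj1 hj2
    have hsin : Real.sin (π * (((k+1 : ℕ):ℝ)/N)) + Real.sin (π * (((k-1 : ℕ):ℝ)/N))
        = 2 * Real.sin (π * ((k:ℝ)/N)) * Real.cos (π * (N:ℝ)⁻¹) := by
      have hk1' : ((k-1 : ℕ):ℝ) = (k:ℝ) - 1 := by
        have h1k : 1 ≤ k := hk1
        push_cast [h1k]; ring
      have ea : π * (((k:ℝ)+1)/N) = π * ((k:ℝ)/N) + π * (N:ℝ)⁻¹ := by field_simp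
      have eb : π * (((k:ℝ)-1)/N) = π * ((k:ℝ)/N) - π * (N:ℝ)⁻¹ := by field_simp
      rw [hk1']
      push_cast
      rw [ea, eb, Real.sin_add, Real.sin_sub]
      ring
    simp only [hR, hE, hlam]
    unfold dx2₃ dy2₃ dz2₃
    unfold dx2 dy2 at e2
    unfold dx2₃ dy2₃ dz2₃ at e3
    have hNN : (((N:ℝ)⁻¹)⁻¹) ^ 2 = (N:ℝ) ^ 2 := by rw [inv_inv]
    linear_combination e3 - Real.sin (π * ((k:ℝ)/N)) * e2
      + (gam N i j * W i j / ((N:ℝ)⁻¹ ^ 2)) * hsin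
      - (2 * Real.sin (π * ((k:ℝ)/N)) * W i j * gam N i j
          * (1 - Real.cos (π * (N:ℝ)⁻¹))) * hNN
  -- bound on R
  have hRb : ∀ i j k, 0 < i → i < N → 0 < j → j < N → 0 < k → k < N →
      |R i j k| ≤ 13 * (supNorm F * (N:ℝ)⁻¹ ^ 2) := by
    intro i j k hi1 hi2 hj1 hj2 hk1 hk2
    have b1 : |gam N i j| ≤ 1 := by
      rw [abs_of_pos (gam_pos N i j)]; exact gam_le_one N i j
    have b3 : |W i j| ≤ supNorm F / 8 := hW i j hi2.le hj2.le
    have b4 : |Real.sin (π * ((k:ℝ)/N))| ≤ 1 := Real.abs_sin_le_one _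
    have c1 : |W i j * Real.sin (π * ((k:ℝ)/N))| ≤ supNorm F / 8 := by
      rw [abs_mul]
      calc |W i j| * |Real.sin (π * ((k:ℝ)/N))| ≤ (supNorm F / 8) * 1 :=
            mul_le_mul b3 b4 (abs_nonneg _) (by linarith)
        _ = supNorm F / 8 := mul_one _
    have c2 : |(π ^ 2 - lam) * (W i j * Real.sin (π * ((k:ℝ)/N)))|
        ≤ (104 * (N:ℝ)⁻¹ ^ 2) * (supNorm F / 8) := by
      rw [abs_mul]
      exact mul_le_mul hlamb c1 (abs_nonneg _) (by positivity)
    have c3 : |R i j k| ≤ 1 * ((104 * (N:ℝ)⁻¹ ^ 2) * (supNorm F / 8)) := by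
      simp only [hR]
      rw [abs_mul]
      exact mul_le_mul b1 c2 (abs_nonneg _) zero_le_one
    calc |R i j k| ≤ 1 * ((104 * (N:ℝ)⁻¹ ^ 2) * (supNorm F / 8)) := c3
      _ = 13 * (supNorm F * (N:ℝ)⁻¹ ^ 2) := by ring
  have hM0 : 0 ≤ 13 * (supNorm F * (N:ℝ)⁻¹ ^ 2) := by positivity
  have hfin := stab3d N hN E R (13 * (supNorm F * (N:ℝ)⁻¹ ^ 2)) hM0 hEeq hEb hRb
  intro i j k hi hj hk
  have h1 := hfin i j k hi hj hk
  have h2' : |E i j k| = |U i j k - W i j * Real.sin (π * ((k:ℝ)/N))| := by rw [hE]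
  have hx : 0 ≤ supNorm F * (N:ℝ)⁻¹ ^ 2 := by positivity
  rw [← h2']
  calc |E i j k| ≤ 13 * (supNorm F * (N:ℝ)⁻¹ ^ 2) / 8 := h1
    _ ≤ 100 * supNorm F * (N:ℝ)⁻¹ ^ 2 := by nlinarith
end
end
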